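/- Let μ : (a,b) → ℝ solve μ' = μ² + C with μ(0) = μ₀, and suppose μ₀² + C ≠ 0. Fix d, f₀ ∈ ℝ and define f(x) := d·∫₀ˣ exp(2∫₀ʸ μ(z) dz) dy + f₀. Then f(x) = d·(μ(x) - μ₀)/(μ₀² + C) + f₀ for all x ∈ (a,b), and f satisfies the Riccati-type equation f'(x) = e₁ f(x)² + e₂ f(x) + e₃ for suitable constants e₁, e₂, e₃ ∈ ℝ. -/

import Mathlib

/-!
Along a solution of `μ' = μ² + C` the quantity `(μ² + C) · exp (-2 ∫₀ˣ μ)` has derivative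
`2μ(μ² + C) e - 2μ(μ² + C) e = 0`, so `exp (2 ∫₀ˣ μ) = (μ² + C) / (μ₀² + C)`. Hence
`f' = d (μ² + C) / (μ₀² + C) = d μ' / (μ₀² + C)`, which integrates to the affine formula for `f`;
substituting `μ = μ₀ + (μ₀² + C)(f - f₀) / d` into `f' = d (μ² + C) / (μ₀² + C)` gives a
quadratic in `f`.
-/

open Set intervalIntegral

theorem IsOpen.eqOn_of_hasDerivAt_eq {s : Set ℝ} (hs : IsOpen s) (hs' : IsPreconnected s)
    {F G F' : ℝ → ℝ} (hF : ∀ x ∈ s, HasDerivAt F (F' x) x) (hG : ∀ x ∈ s, HasDerivAt G (F' x) x)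
    {x₀ : ℝ} (hx₀ : x₀ ∈ s) (h : F x₀ = G x₀) : EqOn F G s :=
  hs.eqOn_of_deriv_eq hs' (fun x hx => (hF x hx).differentiableAt.differentiableWithinAt)
    (fun x hx => (hG x hx).differentiableAt.differentiableWithinAt)
    (fun x hx => by simp only [(hF x hx).deriv, (hG x hx).deriv]) hx₀ h

theorem hasDerivAt_integral_of_continuousOn {E : Type*} [NormedAddCommGroup E]
    [NormedSpace ℝ E] [CompleteSpace E] {s : Set ℝ} (hs : IsOpen s) (hs' : s.OrdConnected)
    {F : ℝ → E} (hF : ContinuousOn F s) {x₀ x : ℝ} (hx₀ : x₀ ∈ s) (hx : x ∈ s) :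
    HasDerivAt (fun u => ∫ y in x₀..u, F y) (F x) x :=
  integral_hasDerivAt_right ((hF.mono (hs'.uIcc_subset hx₀ hx)).intervalIntegrable)
    (hF.stronglyMeasurableAtFilter hs x hx) (hF.continuousAt (hs.mem_nhds hx))

theorem exp_two_integral_eq_of_hasDerivAt_sq_add {s : Set ℝ} (hs : IsOpen s)
    (hs' : s.OrdConnected) {μ : ℝ → ℝ} {C x₀ : ℝ} (hode : ∀ x ∈ s, HasDerivAt μ (μ x ^ 2 + C) x)
    (hx₀ : x₀ ∈ s) (hC : μ x₀ ^ 2 + C ≠ 0) {x : ℝ} (hx : x ∈ s) :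
    Real.exp (2 * ∫ z in x₀..x, μ z) = (μ x ^ 2 + C) / (μ x₀ ^ 2 + C) := by
  set I : ℝ → ℝ := fun u => ∫ z in x₀..u, μ z
  have hI : ∀ x ∈ s, HasDerivAt I (μ x) x := fun x hx =>
    hasDerivAt_integral_of_continuousOn hs hs'
      (fun y hy => (hode y hy).continuousAt.continuousWithinAt) hx₀ hx
  have hconst : ∀ x ∈ s, HasDerivAt (fun u => (μ u ^ 2 + C) * Real.exp (-(2 * I u))) 0 x := by
    intro x hx
    have hsq : HasDerivAt (fun u => μ u ^ 2 + C) (2 * μ x * (μ x ^ 2 + C)) x :=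
      (((hode x hx).fun_pow 2).add_const C).congr_deriv (by norm_num)
    have hexp : HasDerivAt (fun u => Real.exp (-(2 * I u)))
        (Real.exp (-(2 * I x)) * -(2 * μ x)) x :=
      (((hI x hx).const_mul 2).neg).exp
    exact (hsq.mul hexp).congr_deriv (by ring)
  have hI₀ : I x₀ = 0 := integral_same
  have key := hs.eqOn_of_hasDerivAt_eq hs'.isPreconnected hconst
    (fun x _ => hasDerivAt_const x ((μ x₀ ^ 2 + C) * Real.exp (-(2 * I x₀)))) hx₀ rfl hx
  simp only [hI₀, mul_zero, neg_zero, Real.exp_zero, mul_one, Real.exp_neg] at key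
  rw [eq_div_iff hC, ← key, mul_left_comm, mul_inv_cancel₀ (Real.exp_pos _).ne', mul_one]

theorem exists_quadratic_eq_comp_affine (α m₀ f₀ C : ℝ) :
    ∃ e₁ e₂ e₃ : ℝ, ∀ m : ℝ, α * (m ^ 2 + C) =
      e₁ * (α * (m - m₀) + f₀) ^ 2 + e₂ * (α * (m - m₀) + f₀) + e₃ := by
  rcases eq_or_ne α 0 with rfl | hα
  · exact ⟨0, 0, 0, fun m => by ring⟩
  · refine ⟨α⁻¹, 2 * (m₀ - α⁻¹ * f₀), α⁻¹ * f₀ ^ 2 - 2 * m₀ * f₀ + α * (m₀ ^ 2 + C),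
      fun m => ?_⟩
    field_simp
    ring

/-- If μ solves μ' = μ² + C on (a,b) ∋ 0 with μ(0) = μ₀ and μ₀² + C ≠ 0, then
f(x) := d·∫₀ˣ exp(2∫₀ʸ μ) dy + f₀ satisfies f(x) = d·(μ(x) - μ₀)/(μ₀² + C) + f₀
and solves a Riccati-type equation f' = e₁f² + e₂f + e₃. -/
theorem stmt_3 (a b C μ₀ d f₀ : ℝ) (μ : ℝ → ℝ) (ha : a < 0) (hb : 0 < b)
    (hode : ∀ x ∈ Set.Ioo a b, HasDerivAt μ (μ x ^ 2 + C) x)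
    (hinit : μ 0 = μ₀) (hC : μ₀ ^ 2 + C ≠ 0)
    (f : ℝ → ℝ)
    (hf : ∀ x, f x = d * (∫ y in (0:ℝ)..x, Real.exp (2 * ∫ z in (0:ℝ)..y, μ z)) + f₀) :
    (∀ x ∈ Set.Ioo a b, f x = d * (μ x - μ₀) / (μ₀ ^ 2 + C) + f₀) ∧
    ∃ e₁ e₂ e₃ : ℝ, ∀ x ∈ Set.Ioo a b,
      HasDerivAt f (e₁ * f x ^ 2 + e₂ * f x + e₃) x := by
  subst hinit
  have h0 : (0 : ℝ) ∈ Ioo a b := ⟨ha, hb⟩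
  set α := d / (μ 0 ^ 2 + C)
  have hexp : ∀ x ∈ Ioo a b,
      Real.exp (2 * ∫ z in (0:ℝ)..x, μ z) = (μ x ^ 2 + C) / (μ 0 ^ 2 + C) :=
    fun x hx => exp_two_integral_eq_of_hasDerivAt_sq_add isOpen_Ioo ordConnected_Ioo hode h0 hC hx
  have hf' : ∀ x ∈ Ioo a b, HasDerivAt f (α * (μ x ^ 2 + C)) x := by
    intro x hx
    have hcont : ContinuousOn (fun y => (μ y ^ 2 + C) / (μ 0 ^ 2 + C)) (Ioo a b) :=
      fun y hy => (((hode y hy).continuousAt.pow 2).add_const C).div_const _ |>.continuousWithinAt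
    have hint := hasDerivAt_integral_of_continuousOn isOpen_Ioo ordConnected_Ioo hcont h0 hx
    rw [funext hf]
    refine ((hint.const_mul d).add_const f₀).congr_of_eventuallyEq ?_ |>.congr_deriv (by ring)
    filter_upwards [isOpen_Ioo.mem_nhds hx] with y hy
    rw [integral_congr fun z hz => hexp z (ordConnected_Ioo.uIcc_subset h0 hy hz)]
  have hformula : EqOn f (fun x => α * (μ x - μ 0) + f₀) (Ioo a b) :=
    isOpen_Ioo.eqOn_of_hasDerivAt_eq isPreconnected_Ioo hf'
      (fun x hx => (((hode x hx).sub_const (μ 0)).const_mul α).add_const f₀) h0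
      (by simp [hf 0])
  refine ⟨fun x hx => by rw [hformula hx, mul_div_right_comm], ?_⟩
  obtain ⟨e₁, e₂, e₃, he⟩ := exists_quadratic_eq_comp_affine α (μ 0) f₀ C
  exact ⟨e₁, e₂, e₃, fun x hx => by simpa only [hformula hx, ← he] using hf' x hx⟩
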